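/- Let k be a perfect field of characteristic p complete with respect to a non-trivial non-archimedean norm, and let R = k[T^{1/p^∞}, T^{-1/p^∞}][Z]/(Z²) with R₀ the 𝒪_k-submodule with basis ϖ^{|n|}Tⁿ and ϖ^{-|n|}TⁿZ for n ∈ ℤ[1/p]. Then ϖ⁻¹Z ∉ R₀, while ϖ⁻ⁿZ ∈ R₀[T] and ϖ⁻ⁿZ ∈ R₀[T⁻¹] for all n ≥ 0. -/

import Mathlib

/-- The valuation ring `𝒪_k = {c : k | ‖c‖ ≤ 1}` of a non-archimedean normed field. -/
def valuationSubring (k : Type*) [NormedField k] [IsUltrametricDist k] : Subring k where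
  carrier := {c | ‖c‖ ≤ 1}
  one_mem' := by simp
  zero_mem' := by simp
  neg_mem' := by simp
  mul_mem' := by
    intro a b ha hb
    simp only [Set.mem_setOf_eq] at *
    calc ‖a * b‖ = ‖a‖ * ‖b‖ := norm_mul a b
      _ ≤ 1 * 1 := mul_le_mul ha hb (norm_nonneg b) zero_le_one
      _ = 1 := one_mul 1
  add_mem' := by
    intro a b ha hb
    simp only [Set.mem_setOf_eq] at *
    exact le_trans (IsUltrametricDist.norm_add_le_max a b) (max_le ha hb)

/-- The additive subgroup `ℤ[1/p] ⊆ ℚ`. -/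
def zInvSubgroup (p : ℕ) (hp : (p : ℚ) ≠ 0) : AddSubgroup ℚ where
  carrier := {q | ∃ (m : ℤ) (j : ℕ), q = m / p ^ j}
  zero_mem' := ⟨0, 0, by norm_num⟩
  add_mem' := by
    rintro a b ⟨m, j, rfl⟩ ⟨m', j', rfl⟩
    refine ⟨m * p ^ j' + m' * p ^ j, j + j', ?_⟩
    have h1 : (p : ℚ) ^ j ≠ 0 := pow_ne_zero _ hp
    have h2 : (p : ℚ) ^ j' ≠ 0 := pow_ne_zero _ hp
    push_cast
    rw [div_add_div _ _ h1 h2, pow_add]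
    ring_nf
  neg_mem' := by
    rintro a ⟨m, j, rfl⟩
    exact ⟨-m, j, by push_cast; ring⟩

/-! The coefficient of `T⁰Z` is an `𝒪_k`-linear functional on `R`. On the basis of `R₀` it
vanishes except at `Z = ϖ^{-|0|}T⁰Z`, where it is `1`, so by the ultrametric inequality it has
norm `≤ 1` on all of `R₀`; on `ϖ⁻¹Z` it is `ϖ⁻¹`. Conversely `ϖ⁻ⁿZ = (T^{±1})ⁿ · ϖ^{-n}T^{∓n}Z`
is a product of a power of `T^{±1}` and a basis element of `R₀`. -/

section FractionalPowers

variable {M₀ : Type*} [GroupWithZero M₀] {ρ : ℚ → M₀}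

theorem map_zero_eq_one_of_map_add (hρadd : ∀ a b, ρ (a + b) = ρ a * ρ b) (hρ0 : ρ 0 ≠ 0) :
    ρ 0 = 1 :=
  mul_left_cancel₀ hρ0 (by rw [← hρadd, add_zero, mul_one])

theorem map_neg_natCast_of_map_add (hρadd : ∀ a b, ρ (a + b) = ρ a * ρ b) (hρ0 : ρ 0 = 1)
    (n : ℕ) : ρ (-n) = (ρ 1)⁻¹ ^ n := by
  have hρn : ρ n = ρ 1 ^ n := by
    induction n with
    | zero => simpa using hρ0
    | succ m ih => rw [Nat.cast_succ, hρadd, ih, pow_succ]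
  rw [inv_pow, ← hρn]
  exact eq_inv_of_mul_eq_one_left (by rw [← hρadd, neg_add_cancel, hρ0])

end FractionalPowers

section RostLattice

open TrivSqZeroExt AddMonoidAlgebra

theorem norm_le_one_of_mem_span_valuationSubring {k M : Type*} [NormedField k]
    [IsUltrametricDist k] [AddCommMonoid M] [Module (valuationSubring k) M]
    (f : M →ₗ[valuationSubring k] k) {S : Set M} (hS : ∀ s ∈ S, ‖f s‖ ≤ 1) {x : M}
    (hx : x ∈ Submodule.span (valuationSubring k) S) : ‖f x‖ ≤ 1 := by
  induction hx using Submodule.span_induction with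
  | mem s hs => exact hS s hs
  | zero => simp
  | add x y _ _ hx hy =>
    rw [map_add]
    exact (IsUltrametricDist.norm_add_le_max _ _).trans (max_le hx hy)
  | smul c x _ hx =>
    rw [map_smul, Subring.smul_def, smul_eq_mul, norm_mul]
    exact mul_le_one₀ c.2 (norm_nonneg _) hx

theorem inl_single_pow_mul_inr_single {R G : Type*} [CommSemiring R] [AddCommMonoid G]
    (a b : G) (s : R) (n : ℕ) :
    (inl (single a 1) : DualNumber R[G]) ^ n * inr (single b s) = inr (single (n • a + b) s) := by
  rw [inl_pow, inl_mul_inr, single_pow, one_pow, smul_eq_mul, single_mul_single, one_mul]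

variable {k : Type*} [NormedField k] (ρ : ℚ → k) (G : AddSubgroup ℚ)

/-- The basis `ϖ^{|n|}Tⁿ`, `ϖ^{-|n|}TⁿZ` of `R₀`, with `ϖ^q` read as `ρ q`. -/
def rostGenerators : Set (DualNumber k[G]) :=
  (Set.range fun n : G => ρ |(n : ℚ)| • inl (single n (1 : k))) ∪
    (Set.range fun n : G => ρ (-|(n : ℚ)|) • inr (M := k[G]) (single n (1 : k)))

variable [IsUltrametricDist k] {ρ G}

theorem norm_coeff_zero_snd_le_one_of_mem_span_rostGenerators (hρ0 : ‖ρ 0‖ ≤ 1)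
    {x : DualNumber k[G]} (hx : x ∈ Submodule.span (valuationSubring k) (rostGenerators ρ G)) :
    ‖x.snd.coeff 0‖ ≤ 1 := by
  let f : DualNumber k[G] →ₗ[valuationSubring k] k :=
    Finsupp.lapply 0 ∘ₗ (coeffLinearEquiv (valuationSubring k)).toLinearMap ∘ₗ
      LinearMap.snd (valuationSubring k) k[G] k[G]
  have hf (y : DualNumber k[G]) : f y = y.snd.coeff 0 := rfl
  refine hf x ▸ norm_le_one_of_mem_span_valuationSubring f ?_ hx
  rintro _ (⟨n, rfl⟩ | ⟨n, rfl⟩)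
  · simp [hf]
  · by_cases hn : n = 0
    · simpa [hf, hn] using hρ0
    · simp [hf, hn]

theorem smul_inr_one_mem_closure_span_rostGenerators (hρadd : ∀ a b, ρ (a + b) = ρ a * ρ b)
    (hρ0 : ρ 0 = 1) {u : G} (hu : |(u : ℚ)| = 1) (n : ℕ) :
    (ρ 1)⁻¹ ^ n • inr 1 ∈ Subring.closure
      ((Submodule.span (valuationSubring k) (rostGenerators ρ G) : Set (DualNumber k[G])) ∪
        {inl (single u 1)}) := by
  have hgen : ρ (-|((-(n • u) : G) : ℚ)|) • inr (M := k[G]) (single (-(n • u)) (1 : k)) ∈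
      Submodule.span (valuationSubring k) (rostGenerators ρ G) :=
    Submodule.subset_span (Or.inr ⟨_, rfl⟩)
  have hcoeff : ρ (-|((-(n • u) : G) : ℚ)|) = (ρ 1)⁻¹ ^ n := by
    rw [← map_neg_natCast_of_map_add hρadd hρ0]
    push_cast
    rw [abs_neg, nsmul_eq_mul, abs_mul, hu, Nat.abs_cast, mul_one]
  have hprod : (inl (single u 1) : DualNumber k[G]) ^ n *
      ρ (-|((-(n • u) : G) : ℚ)|) • inr (M := k[G]) (single (-(n • u)) (1 : k)) =
      (ρ 1)⁻¹ ^ n • inr (1 : k[G]) := by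
    rw [← inr_smul, smul_single', mul_one, inl_single_pow_mul_inr_single, add_neg_cancel, hcoeff,
      ← inr_smul, one_def, smul_single', mul_one]
  rw [← hprod]
  exact mul_mem (pow_mem (Subring.subset_closure (Set.mem_union_right _ (Set.mem_singleton _))) n)
    (Subring.subset_closure (Set.mem_union_left _ hgen))

end RostLattice

/-- Let `k` be a perfect field of characteristic `p`, complete for a
non-trivial non-archimedean norm, and `R = k[T^{1/p^∞}, T^{-1/p^∞}][Z]/(Z²)` (modelled
as dual numbers over the group algebra `k[ℤ[1/p]]`), with `R₀` the `𝒪_k`-submodule with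
basis `ϖ^{|n|}Tⁿ` and `ϖ^{-|n|}TⁿZ` for `n ∈ ℤ[1/p]`, where `ϖ^q` is interpreted via a
compatible system `ρ : ℚ → k` of fractional powers of `ϖ = ρ 1`. Then `ϖ⁻¹Z ∉ R₀`,
while `ϖ⁻ⁿZ ∈ R₀[T]` and `ϖ⁻ⁿZ ∈ R₀[T⁻¹]` for all `n ≥ 0`. -/
theorem perfectoid_rost_example
    (k : Type*) [NontriviallyNormedField k] [IsUltrametricDist k]
    (p : ℕ)
    (hp : (p : ℚ) ≠ 0)
    (ρ : ℚ → k) (hρadd : ∀ a b : ℚ, ρ (a + b) = ρ a * ρ b)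
    (hρnorm : ∀ q : ℚ, ‖ρ q‖ = ‖ρ 1‖ ^ (q : ℝ))
    (ϖ : k) (hϖ : ϖ = ρ 1) (hϖ0 : 0 < ‖ϖ‖) (hϖ1 : ‖ϖ‖ < 1)
    (R₀ : Submodule (valuationSubring k)
      (DualNumber (AddMonoidAlgebra k (zInvSubgroup p hp))))
    (hR₀ : R₀ = Submodule.span (valuationSubring k)
      ((Set.range fun n : zInvSubgroup p hp =>
          ρ |(n : ℚ)| • TrivSqZeroExt.inl (AddMonoidAlgebra.single n (1 : k))) ∪
       (Set.range fun n : zInvSubgroup p hp =>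
          ρ (-|(n : ℚ)|) •
            TrivSqZeroExt.inr (M := AddMonoidAlgebra k (zInvSubgroup p hp))
              (AddMonoidAlgebra.single n (1 : k)))))
    (Z : DualNumber (AddMonoidAlgebra k (zInvSubgroup p hp)))
    (hZ : Z = TrivSqZeroExt.inr (M := AddMonoidAlgebra k (zInvSubgroup p hp)) 1)
    (T : DualNumber (AddMonoidAlgebra k (zInvSubgroup p hp)))
    (hT : T = TrivSqZeroExt.inl
      (AddMonoidAlgebra.single (⟨1, 1, 0, by norm_num⟩ : zInvSubgroup p hp) (1 : k))) :
    ϖ⁻¹ • Z ∉ R₀ ∧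
    (∀ n : ℕ, (ϖ⁻¹) ^ n • Z ∈ Subring.closure
      ((R₀ : Set (DualNumber (AddMonoidAlgebra k (zInvSubgroup p hp)))) ∪ {T})) ∧
    (∀ n : ℕ, (ϖ⁻¹) ^ n • Z ∈ Subring.closure
      ((R₀ : Set (DualNumber (AddMonoidAlgebra k (zInvSubgroup p hp)))) ∪ {TrivSqZeroExt.inl
        (AddMonoidAlgebra.single (-(⟨1, 1, 0, by norm_num⟩ : zInvSubgroup p hp)) (1 : k))})) := by
  have hρ0 : ρ 0 = 1 :=
    map_zero_eq_one_of_map_add hρadd (norm_pos_iff.mp (by rw [hρnorm]; norm_num))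
  subst hϖ hR₀ hZ hT
  refine ⟨fun hmem => ?_, smul_inr_one_mem_closure_span_rostGenerators hρadd hρ0 (by simp),
    smul_inr_one_mem_closure_span_rostGenerators hρadd hρ0 (by simp)⟩
  have hcoeff := norm_coeff_zero_snd_le_one_of_mem_span_rostGenerators (by rw [hρ0, norm_one]) hmem
  have hϖinv : ‖ρ 1‖⁻¹ ≤ 1 := by simpa [AddMonoidAlgebra.one_def] using hcoeff
  exact ((one_lt_inv₀ hϖ0).2 hϖ1).not_ge hϖinv
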